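/- arXiv:2101.04518 — 3 statements merged into one kernel-verified Lean document; each statement's English description precedes it below -/
import Mathlib

section
/- Let q ≥ 2 be an integer and let n, k, t be positive integers with t < k and 2k ≤ n. Then q^{(k-t)^2} · [n-k choose k-t]_q · [k choose t]_q > [n-t choose k-t]_q. -/
/-- The Gaussian binomial coefficient `[a choose b]_q`, defined (for an integer `q ≥ 2`)
as the product `∏_{0 ≤ i < b} (q^(a-i) - 1)/(q^(b-i) - 1)`, viewed as a rational number. -/
noncomputable def gaussBinom (q a b : ℕ) : ℚ :=
  ∏ i ∈ Finset.range b, (((q : ℚ) ^ (a - i) - 1) / ((q : ℚ) ^ (b - i) - 1))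

/-!
Compare the Gaussian binomials factor by factor, with `d = k - t`. Since `n - t = (n - k) + d`,
each factor of `[n-t choose d]_q` exceeds the matching factor of `[n-k choose d]_q` by at most
`q^(d+1)`, so `[n-t choose d]_q ≤ q^(d^2) q^d [n-k choose d]_q`. On the other side every factor
`(q^(k-i) - 1)/(q^(t-i) - 1)` of `[k choose t]_q` exceeds `q^d`, and there is at least one, so
`q^d < [k choose t]_q`.
-/

section PowSubOne

variable {K : Type*} [Field K] [LinearOrder K] [IsStrictOrderedRing K] {x : K}

lemma pow_add_sub_one_le_mul (hx : 2 ≤ x) {a : ℕ} (ha : a ≠ 0) (d : ℕ) :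
    x ^ (a + d) - 1 ≤ x ^ (d + 1) * (x ^ a - 1) := by
  have hmono : x ^ (d + 1) ≤ x ^ (a + d) := pow_le_pow_right₀ (by linarith) (by omega)
  have hpos : 0 ≤ x ^ (a + d) := by positivity
  -- rearranged, this is `x^(d+1) - 1 ≤ x^(a+d) (x - 1)`, and `x - 1 ≥ 1`
  have : x ^ (d + 1) * x ^ a = x ^ (a + d) * x := by rw [← pow_add, ← pow_succ]; ring_nf
  nlinarith

lemma pow_mul_pow_sub_one_lt (hx : 1 < x) {d : ℕ} (hd : d ≠ 0) (b : ℕ) :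
    x ^ d * (x ^ b - 1) < x ^ (b + d) - 1 := by
  have : 1 < x ^ d := one_lt_pow₀ hx hd
  rw [mul_sub, ← pow_add, add_comm d]
  linarith

end PowSubOne

lemma natCast_pow_sub_one_pos {q : ℕ} (hq : 1 < q) {m : ℕ} (hm : m ≠ 0) :
    0 < (q : ℚ) ^ m - 1 :=
  sub_pos.mpr (one_lt_pow₀ (by exact_mod_cast hq) hm)

lemma gaussBinom_pos {q a b : ℕ} (hq : 1 < q) (hba : b ≤ a) : 0 < gaussBinom q a b :=
  Finset.prod_pos fun i hi => by
    rw [Finset.mem_range] at hi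
    exact div_pos (natCast_pow_sub_one_pos hq (by omega))
      (natCast_pow_sub_one_pos hq (by omega))

lemma gaussBinom_add_le {q : ℕ} (hq : 2 ≤ q) {a b : ℕ} (hba : b ≤ a) (d : ℕ) :
    gaussBinom q (a + d) b ≤ (q : ℚ) ^ (b * (d + 1)) * gaussBinom q a b := by
  have hconst : ((q : ℚ) ^ (d + 1)) ^ b = ∏ _i ∈ Finset.range b, (q : ℚ) ^ (d + 1) := by
    rw [Finset.prod_const, Finset.card_range]
  rw [gaussBinom, gaussBinom, pow_mul', hconst, ← Finset.prod_mul_distrib]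
  refine Finset.prod_le_prod (fun i hi => ?_) (fun i hi => ?_) <;> rw [Finset.mem_range] at hi
  · exact div_nonneg (natCast_pow_sub_one_pos (by omega) (by omega)).le
      (natCast_pow_sub_one_pos (by omega) (by omega)).le
  · rw [← mul_div_assoc, div_le_div_iff_of_pos_right (natCast_pow_sub_one_pos (by omega) (by omega)),
      show a + d - i = (a - i) + d by omega]
    exact pow_add_sub_one_le_mul (by exact_mod_cast hq) (by omega) d

lemma pow_mul_lt_gaussBinom {q k t : ℕ} (hq : 1 < q) (ht : 0 < t) (htk : t < k) :
    (q : ℚ) ^ ((k - t) * t) < gaussBinom q k t := by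
  have hconst : ((q : ℚ) ^ (k - t)) ^ t = ∏ _i ∈ Finset.range t, (q : ℚ) ^ (k - t) := by
    rw [Finset.prod_const, Finset.card_range]
  rw [gaussBinom, pow_mul, hconst]
  refine Finset.prod_lt_prod_of_nonempty (fun _ _ => by positivity) (fun i hi => ?_)
    (Finset.nonempty_range_iff.mpr (by omega))
  rw [Finset.mem_range] at hi
  rw [lt_div_iff₀ (natCast_pow_sub_one_pos hq (by omega)), show k - i = (t - i) + (k - t) by omega]
  exact pow_mul_pow_sub_one_lt (by exact_mod_cast hq) (by omega) _

/-- For an integer `q ≥ 2` and positive integers `t < k`, `2k ≤ n`,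
`q^((k-t)^2) [n-k choose k-t]_q [k choose t]_q > [n-t choose k-t]_q`. -/
theorem claim1 (q n k t : ℕ) (hq : 2 ≤ q) (ht : 0 < t) (htk : t < k) (hn : 2 * k ≤ n) :
    gaussBinom q (n - t) (k - t)
      < (q : ℚ) ^ ((k - t) ^ 2) * gaussBinom q (n - k) (k - t) * gaussBinom q k t := by
  set d := k - t
  have hupper : gaussBinom q (n - t) d ≤ (q : ℚ) ^ (d * (d + 1)) * gaussBinom q (n - k) d := by
    rw [show n - t = (n - k) + d by omega]
    exact gaussBinom_add_le hq (by omega) d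
  have hlower : (q : ℚ) ^ d < gaussBinom q k t :=
    calc (q : ℚ) ^ d ≤ (q : ℚ) ^ (d * t) :=
          pow_le_pow_right₀ (by norm_cast; omega) (Nat.le_mul_of_pos_right d ht)
      _ < gaussBinom q k t := pow_mul_lt_gaussBinom (by omega) ht htk
  have hpos : 0 < (q : ℚ) ^ (d ^ 2) * gaussBinom q (n - k) d :=
    mul_pos (by positivity) (gaussBinom_pos (by omega) (by omega))
  calc gaussBinom q (n - t) d ≤ (q : ℚ) ^ (d * (d + 1)) * gaussBinom q (n - k) d := hupper
    _ = (q : ℚ) ^ (d ^ 2) * gaussBinom q (n - k) d * (q : ℚ) ^ d := by ring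
    _ < (q : ℚ) ^ (d ^ 2) * gaussBinom q (n - k) d * gaussBinom q k t :=
          mul_lt_mul_of_pos_left hlower hpos
end

section
/- Let q be a prime power and let n, k, t be positive integers with t < k and 2k ≤ n. Then the maximum degree Δ of the generalized q-Kneser graph K_q(n,k,t) plus the independence number [n-t choose k-t]_q is strictly less than the number of vertices [n choose k]_q. -/
/-- The Gaussian binomial coefficient `[a choose b]_q` as a natural number:
`(∏_{0 ≤ i < b} (q^(a-i) - 1)) / (∏_{0 ≤ i < b} (q^(b-i) - 1))` (the quotient is exact).
It counts the `b`-dimensional subspaces of an `a`-dimensional vector space over `F_q`. -/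
def gaussBinomNat (q a b : ℕ) : ℕ :=
  (∏ i ∈ Finset.range b, (q ^ (a - i) - 1)) / (∏ i ∈ Finset.range b, (q ^ (b - i) - 1))

/-!
Both `[n choose k]_q` and `[n-t choose k-t]_q` are expanded by the `q`-Vandermonde identity
along `n = (n - k) + k`, resp. `n - t = (n - k) + (k - t)`. The expansion of `[n choose k]_q`
has `k + 1` terms indexed by `j`, those with `j < t` summing exactly to `Δ`. The remaining
ones dominate the terms of the expansion of `[n-t choose k-t]_q` one by one, since
`[k - t choose j]_q ≤ [k choose t + j]_q`, and strictly at `j = 0`, where `1 < [k choose t]_q`.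
-/

open Finset

/-- `qChoose q a b` is `[a choose b]_q`, defined by the `q`-Pascal rule. -/
def qChoose (q : ℕ) : ℕ → ℕ → ℕ
  | _, 0 => 1
  | 0, _ + 1 => 0
  | a + 1, b + 1 => qChoose q a b + q ^ (b + 1) * qChoose q a (b + 1)

namespace qChoose

variable (q : ℕ)

@[simp] lemma zero_right (a : ℕ) : qChoose q a 0 = 1 := by cases a <;> rfl

@[simp] lemma zero_succ (b : ℕ) : qChoose q 0 (b + 1) = 0 := rfl

lemma succ_succ (a b : ℕ) :
    qChoose q (a + 1) (b + 1) = qChoose q a b + q ^ (b + 1) * qChoose q a (b + 1) := rfl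

lemma eq_zero_of_lt {a b : ℕ} (h : a < b) : qChoose q a b = 0 := by
  induction a generalizing b with
  | zero => obtain ⟨c, rfl⟩ := Nat.exists_eq_add_one.2 h; rfl
  | succ a ih =>
    obtain ⟨c, rfl⟩ := Nat.exists_eq_add_one.2 (Nat.zero_lt_of_lt h)
    rw [succ_succ, ih (by omega), ih (by omega), mul_zero, add_zero]

lemma le_add_add (a b c : ℕ) : qChoose q a b ≤ qChoose q (a + c) (b + c) := by
  induction c with
  | zero => rfl
  | succ c ih => exact ih.trans (by rw [← add_assoc, ← add_assoc, succ_succ]; omega)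

lemma pos {a b : ℕ} (h : b ≤ a) : 0 < qChoose q a b := by
  have := le_add_add q (a - b) 0 b
  rwa [zero_right, zero_add, Nat.sub_add_cancel h] at this

lemma two_le {a b : ℕ} (hq : 0 < q) (hb : 0 < b) (hba : b < a) : 2 ≤ qChoose q a b := by
  obtain ⟨a, rfl⟩ := Nat.exists_eq_add_one.2 (Nat.zero_lt_of_lt hba)
  obtain ⟨b, rfl⟩ := Nat.exists_eq_add_one.2 hb
  have h₁ := pos q (a := a) (b := b) (by omega)
  have h₂ := pos q (a := a) (b := b + 1) (by omega)
  have h₃ := Nat.one_le_pow (b + 1) q hq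
  rw [succ_succ]
  nlinarith

/-- The `q`-Vandermonde identity. -/
lemma add_eq_sum_antidiagonal (m p r : ℕ) :
    qChoose q (m + p) r =
      ∑ x ∈ antidiagonal r, q ^ (x.1 * (p - x.2)) * qChoose q m x.1 * qChoose q p x.2 := by
  induction p generalizing r with
  | zero => cases r <;> simp [Nat.sum_antidiagonal_succ']
  | succ p ih =>
    cases r with
    | zero => simp
    | succ s =>
      -- Truncated subtraction in the exponent is harmless: where `p < j + 1` the term vanishes.
      have shift : ∀ x ∈ antidiagonal s,
          q ^ (s + 1) * (q ^ (x.1 * (p - (x.2 + 1))) * qChoose q m x.1 * qChoose q p (x.2 + 1)) =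
            q ^ (x.1 * (p - x.2)) * qChoose q m x.1 * (q ^ (x.2 + 1) * qChoose q p (x.2 + 1)) := by
        rintro ⟨i, j⟩ hij
        rw [HasAntidiagonal.mem_antidiagonal] at hij
        rcases Nat.lt_or_ge p (j + 1) with hp | hp
        · simp [eq_zero_of_lt q hp]
        · obtain ⟨d, rfl⟩ := Nat.exists_eq_add_of_le hp
          simp only [Nat.add_sub_cancel_left, show j + 1 + d - j = d + 1 by omega, ← hij]
          ring
      rw [← add_assoc, succ_succ, ih, ih, Nat.sum_antidiagonal_succ', Nat.sum_antidiagonal_succ',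
        mul_add, mul_sum, sum_congr rfl shift]
      simp only [succ_succ, mul_add, sum_add_distrib, Nat.add_sub_add_right, Nat.sub_zero,
        zero_right]
      ring

lemma add_self_eq_sum (m p : ℕ) :
    qChoose q (m + p) p =
      ∑ j ∈ range (p + 1), q ^ ((p - j) ^ 2) * qChoose q m (p - j) * qChoose q p j := by
  rw [add_eq_sum_antidiagonal, ← Nat.sum_antidiagonal_swap,
    Nat.sum_antidiagonal_eq_sum_range_succ_mk]
  simp only [Prod.swap_prod_mk, sq]

lemma add_self_lt_sum (m p t : ℕ) (hq : 0 < q) (hpm : p ≤ m) (ht : 0 < t) (hp : 0 < p) :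
    qChoose q (m + p) p <
      ∑ j ∈ range (p + 1), q ^ ((p - j) ^ 2) * qChoose q m (p - j) * qChoose q (t + p) (t + j) := by
  rw [add_self_eq_sum]
  refine sum_lt_sum (fun j _ => Nat.mul_le_mul_left _ ?_) ⟨0, by simp, ?_⟩
  · simpa only [add_comm t] using le_add_add q p j t
  · have hpos : 0 < q ^ (p ^ 2) * qChoose q m p := Nat.mul_pos (Nat.pow_pos hq) (pos q hpm)
    have := two_le q hq ht (by omega : t < t + p)
    simp only [Nat.sub_zero, zero_right, mul_one, add_zero]
    nlinarith

end qChoose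

section GaussianProduct

variable (q : ℕ)

lemma prod_range_pow_sub_one_succ (a b : ℕ) :
    ∏ i ∈ range (b + 1), (q ^ (a + 1 - i) - 1) =
      (q ^ (a + 1) - 1) * ∏ i ∈ range b, (q ^ (a - i) - 1) := by
  rw [prod_range_succ', mul_comm]
  simp only [Nat.add_sub_add_right, Nat.sub_zero]

lemma prod_range_pow_sub_one_eq_zero {a b : ℕ} (h : a < b) :
    ∏ i ∈ range b, (q ^ (a - i) - 1) = 0 :=
  prod_eq_zero (mem_range.2 h) (by simp)

lemma pow_sub_one_eq_add {c a : ℕ} (hq : 0 < q) (hca : c ≤ a) :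
    q ^ (a + 1) - 1 = (q ^ (c + 1) - 1) + q ^ (c + 1) * (q ^ (a - c) - 1) := by
  have h₁ := Nat.one_le_pow (c + 1) q hq
  have h₂ := Nat.le_mul_of_pos_right (q ^ (c + 1)) (Nat.pow_pos (n := a - c) hq)
  rw [Nat.mul_sub_one, ← pow_add, show c + 1 + (a - c) = a + 1 by omega] at *
  omega

lemma prod_pow_sub_one_eq_qChoose_mul (hq : 0 < q) (a b : ℕ) :
    ∏ i ∈ range b, (q ^ (a - i) - 1) = qChoose q a b * ∏ i ∈ range b, (q ^ (b - i) - 1) := by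
  induction a generalizing b with
  | zero =>
    cases b with
    | zero => simp
    | succ c => rw [qChoose.zero_succ, zero_mul, prod_range_pow_sub_one_eq_zero q c.succ_pos]
  | succ a ih =>
    cases b with
    | zero => simp
    | succ c =>
      rcases lt_or_ge a c with h | h
      · rw [prod_range_pow_sub_one_eq_zero q (by omega), qChoose.eq_zero_of_lt q (by omega),
          zero_mul]
      have ih_succ := ih (c + 1)
      rw [prod_range_succ, prod_range_pow_sub_one_succ] at ih_succ
      have ih_c := ih c
      set N := ∏ i ∈ range c, (q ^ (a - i) - 1)
      set D := ∏ i ∈ range c, (q ^ (c - i) - 1)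
      rw [prod_range_pow_sub_one_succ, prod_range_pow_sub_one_succ, qChoose.succ_succ,
        pow_sub_one_eq_add q hq h]
      calc ((q ^ (c + 1) - 1) + q ^ (c + 1) * (q ^ (a - c) - 1)) * N
          = (q ^ (c + 1) - 1) * N + q ^ (c + 1) * (N * (q ^ (a - c) - 1)) := by ring
        _ = (q ^ (c + 1) - 1) * (qChoose q a c * D)
              + q ^ (c + 1) * (qChoose q a (c + 1) * ((q ^ (c + 1) - 1) * D)) := by
            rw [ih_succ, ih_c]
        _ = _ := by ring

end GaussianProduct

lemma gaussBinomNat_eq_qChoose (q : ℕ) (hq : 2 ≤ q) (a b : ℕ) :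
    gaussBinomNat q a b = qChoose q a b := by
  have hD : 0 < ∏ i ∈ range b, (q ^ (b - i) - 1) :=
    prod_pos fun i hi => Nat.sub_pos_of_lt <|
      Nat.one_lt_pow (by simp at hi; omega) (by omega)
  rw [gaussBinomNat, prod_pow_sub_one_eq_qChoose_mul q (by omega), Nat.mul_div_cancel _ hD]

/-- For a prime power `q` and positive integers `t < k` with `2k ≤ n`, the maximum degree
`Δ = ∑_{i=0}^{t-1} q^((k-i)^2) [n-k choose k-i]_q [k choose i]_q` of the generalized
`q`-Kneser graph `K_q(n,k,t)` plus its independence number `[n-t choose k-t]_q` is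
strictly less than the number `[n choose k]_q` of vertices. -/
theorem maxDegree_add_indepNum_lt (q n k t : ℕ) (hq : IsPrimePow q) (ht : 0 < t)
    (htk : t < k) (hn : 2 * k ≤ n) :
    (∑ i ∈ Finset.range t,
        q ^ ((k - i) ^ 2) * gaussBinomNat q (n - k) (k - i) * gaussBinomNat q k i)
      + gaussBinomNat q (n - t) (k - t) < gaussBinomNat q n k := by
  simp only [gaussBinomNat_eq_qChoose q hq.two_le]
  obtain ⟨p, rfl⟩ := Nat.exists_eq_add_of_le htk.le
  obtain ⟨m, rfl⟩ := Nat.exists_eq_add_of_le (by omega : t + p ≤ n)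
  rw [show t + p + m - t = m + p by omega, Nat.add_sub_cancel_left, Nat.add_sub_cancel_left,
    add_comm (t + p) m, qChoose.add_self_eq_sum q m (t + p), add_assoc, sum_range_add]
  simp only [Nat.add_sub_add_left]
  exact Nat.add_lt_add_left
    (qChoose.add_self_lt_sum q m p t hq.pos (by omega) ht (by omega)) _
end

section
/- Let V be a finite-dimensional vector space over a field and let s, u_1, u_2 be k-dimensional subspaces with dim(u_1 ∩ u_2) = k - 1, dim(s ∩ u_1) ≥ k - 1, dim(s ∩ u_2) ≥ k - 1, and u_1 ∩ u_2 ⊄ s. Then s ⊆ u_1 + u_2. -/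
open Module

/-! The subspace `s ⊓ u₁ ⊓ u₂` is proper in the `(k - 1)`-dimensional `u₁ ⊓ u₂`, so it has
dimension at most `k - 2`. By Grassmann's formula, `(s ⊓ u₁) ⊔ (s ⊓ u₂)` then has dimension at
least `2 (k - 1) - (k - 2) = k`, so it is all of `s`, and it lies in `u₁ ⊔ u₂`. -/

namespace Submodule

variable {K V : Type*} [DivisionRing K] [AddCommGroup V] [Module K V] [FiniteDimensional K V]

theorem sup_eq_of_finrank_add_finrank_inf_le {p q s : Submodule K V} (hp : p ≤ s) (hq : q ≤ s)
    (h : finrank K s + finrank K ↥(p ⊓ q) ≤ finrank K p + finrank K q) : p ⊔ q = s :=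
  eq_of_le_of_finrank_le (sup_le hp hq) (by have := finrank_sup_add_finrank_inf_eq p q; omega)

theorem le_sup_of_finrank_add_finrank_inf_le {s u₁ u₂ : Submodule K V}
    (h : finrank K s + finrank K ↥(s ⊓ (u₁ ⊓ u₂)) ≤
      finrank K ↥(s ⊓ u₁) + finrank K ↥(s ⊓ u₂)) :
    s ≤ u₁ ⊔ u₂ := by
  rw [inf_inf_distrib_left] at h
  rw [← sup_eq_of_finrank_add_finrank_inf_le inf_le_left inf_le_left h]
  exact sup_le_sup inf_le_right inf_le_right

end Submodule

theorem le_sup_of_large_inters_general (K V : Type*) [Field K] [AddCommGroup V] [Module K V]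
    [FiniteDimensional K V] (k : ℕ) (s u₁ u₂ : Submodule K V)
    (hs : finrank K s = k)
    (h₁₂ : finrank K ↥(u₁ ⊓ u₂) = k - 1)
    (hs₁ : k - 1 ≤ finrank K ↥(s ⊓ u₁)) (hs₂ : k - 1 ≤ finrank K ↥(s ⊓ u₂))
    (hns : ¬ u₁ ⊓ u₂ ≤ s) :
    s ≤ u₁ ⊔ u₂ := by
  have hlt : finrank K ↥(s ⊓ (u₁ ⊓ u₂)) < k - 1 :=
    h₁₂ ▸ Submodule.finrank_lt_finrank_of_lt (inf_lt_right.2 hns)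
  exact Submodule.le_sup_of_finrank_add_finrank_inf_le (by omega)

/-- Let `s, u₁, u₂` be `k`-dimensional subspaces (`k ≥ 2`) of a finite-dimensional vector
space with `dim(u₁ ∩ u₂) = k - 1`, `dim(s ∩ u₁) ≥ k - 1`, `dim(s ∩ u₂) ≥ k - 1`, and
`u₁ ∩ u₂ ⊄ s`. Then `s ⊆ u₁ + u₂`. -/
theorem le_sup_of_large_inters (K V : Type*) [Field K] [AddCommGroup V] [Module K V]
    [FiniteDimensional K V] (k : ℕ) (hk : 2 ≤ k) (s u₁ u₂ : Submodule K V)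
    (hs : finrank K s = k) (hu₁ : finrank K u₁ = k) (hu₂ : finrank K u₂ = k)
    (h₁₂ : finrank K ↥(u₁ ⊓ u₂) = k - 1)
    (hs₁ : k - 1 ≤ finrank K ↥(s ⊓ u₁)) (hs₂ : k - 1 ≤ finrank K ↥(s ⊓ u₂))
    (hns : ¬ u₁ ⊓ u₂ ≤ s) :
    s ≤ u₁ ⊔ u₂ :=
  le_sup_of_large_inters_general K V k s u₁ u₂ hs h₁₂ hs₁ hs₂ hns
end
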